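/- If a state (I_s, I_h) satisfies ♯e ≤ n (defined as e ≠ 0 ∧ ¬(n+1 copies of (∃y: y ↦ e) separated, * true)), then the number of locations l ∈ dom(I_h) with I_h(l) = [e] is at most n. -/
import Mathlib


abbrev Val := ℕ
abbrev Stack := ℕ → Val
abbrev Heap := ℕ → Option Val

def Heap.dom (h : Heap) : Set ℕ := {l | h l ≠ none}

def Heap.Disj (h1 h2 : Heap) : Prop := ∀ l, h1 l = none ∨ h2 l = none

def Heap.union (h1 h2 : Heap) : Heap := fun l => (h1 l).orElse (fun _ => h2 l)

def Heap.emptyH : Heap := fun _ => none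

inductive Term
  | const : ℕ → Term
  | var : ℕ → Term

def Term.fv : Term → Set ℕ
  | .const _ => ∅
  | .var x => {x}

def evalT (s : Stack) : Term → Val
  | .const n => n
  | .var x => s x

inductive SL
  | eq : Term → Term → SL
  | pto : Term → Term → SL
  | not : SL → SL
  | or : SL → SL → SL
  | sep : SL → SL → SL
  | ex : ℕ → SL → SL

def sat (s : Stack) (h : Heap) : SL → Prop
  | .eq e1 e2 => evalT s e1 = evalT s e2
  | .pto e1 e2 => Heap.dom h = {evalT s e1} ∧ h (evalT s e1) = some (evalT s e2)
  | .not φ => ¬ sat s h φ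
  | .or φ1 φ2 => sat s h φ1 ∨ sat s h φ2
  | .sep φ1 φ2 => ∃ h1 h2, Heap.Disj h1 h2 ∧ Heap.union h1 h2 = h ∧ sat s h1 φ1 ∧ sat s h2 φ2
  | .ex x φ => ∃ v : Val, sat (Function.update s x v) h φ

def SL.tt : SL := .eq (.const 0) (.const 0)
def SL.ff : SL := .not SL.tt
def SL.and (a b : SL) : SL := .not (.or (.not a) (.not b))
def SL.neq (e1 e2 : Term) : SL := .not (.eq e1 e2)

def predF (e : Term) (y : ℕ) : SL := .ex y (.pto (.var y) e)

def iterSep : ℕ → SL → SL → SL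
  | 0, _, base => base
  | n+1, ψ, base => .sep ψ (iterSep n ψ base)

/-- ♯e ≤ n ≝ e ≠ 0 ∧ ¬((∃y:y↦e) * ⋯ * (∃y:y↦e) * true) with n+1 copies. -/
def leF (e : Term) (y : ℕ) (n : ℕ) : SL :=
  SL.and (SL.neq e (.const 0)) (.not (iterSep (n+1) (predF e y) SL.tt))


lemma evalT_update (s : Stack) (e : Term) (y : ℕ) (v : Val) (hy : y ∉ Term.fv e) :
    evalT (Function.update s y v) e = evalT s e := by
  cases e with
  | const n => rfl
  | var x =>
    simp [Term.fv] at hy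
    simp [evalT, Function.update, Ne.symm hy]

lemma iter_of_subset (s : Stack) (e : Term) (y : ℕ) (v : Val)
    (hv : v = evalT s e) (hy : y ∉ Term.fv e) :
    ∀ (F : Finset ℕ) (h : Heap), (∀ l ∈ F, h l = some v) →
      sat s h (iterSep F.card (predF e y) SL.tt) := by
  intro F
  induction F using Finset.induction with
  | empty => intro h _; simp [iterSep, SL.tt, sat, evalT]
  | @insert a F ha ih =>
    intro h hF
    rw [Finset.card_insert_of_notMem ha]
    refine ⟨fun l => if l = a then some v else none,
            fun l => if l = a then none else h l, ?_, ?_, ?_, ?_⟩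
    · intro l
      by_cases hl : l = a <;> simp [hl]
    · funext l
      by_cases hl : l = a <;> simp [Heap.union, hl, Option.orElse]
      exact (hF a (Finset.mem_insert_self a F)).symm
    · refine ⟨a, ?_⟩
      have k1 : evalT (Function.update s y a) (Term.var y) = a := by simp [evalT]
      have k2 : evalT (Function.update s y a) e = v := by
        rw [evalT_update s e y a hy, ← hv]
      show Heap.dom _ = {evalT (Function.update s y a) (Term.var y)} ∧ _
      rw [k1, k2]
      refine ⟨?_, by simp⟩
      ext l
      simp only [Heap.dom, Set.mem_setOf_eq, Set.mem_singleton_iff]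
      by_cases hl : l = a <;> simp [hl]
    · have := ih (fun l => if l = a then none else h l) ?_
      · exact this
      · intro l hl
        have hne : l ≠ a := fun hh => ha (hh ▸ hl)
        simp [hne, hF l (Finset.mem_insert_of_mem hl)]

/-- if ♯e ≤ n holds then e has at most n predecessors. -/
theorem stmt_7 (s : Stack) (h : Heap) (e : Term) (y : ℕ) (n : ℕ)
    (hy : y ∉ Term.fv e) (hfin : (Heap.dom h).Finite)
    (hsat : sat s h (leF e y n)) :
    ({l | h l = some (evalT s e)}).ncard ≤ n := by
  by_contra hlt
  push_neg at hlt
  set v := evalT s e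
  have hSfin : ({l | h l = some v}).Finite :=
    hfin.subset (by intro l hl; simp [Heap.dom]; simp at hl; simp [hl])
  have hcard : n + 1 ≤ hSfin.toFinset.card := by
    rw [Set.ncard_eq_toFinset_card _ hSfin] at hlt
    omega
  obtain ⟨F, hFsub, hFcard⟩ := Finset.exists_subset_card_eq hcard
  have hsatIter : sat s h (iterSep (n+1) (predF e y) SL.tt) := by
    rw [← hFcard]
    apply iter_of_subset s e y v rfl hy
    intro l hl
    have := hFsub hl
    simpa using hSfin.mem_toFinset.mp this
  simp only [leF, SL.and, sat] at hsat
  exact hsat (Or.inr (fun hn => hn hsatIter))
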